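/- Assume L(ε) stabilizes at k ≥ 0. Then for every l ≥ 2: E_{k+1+a,k+1+l} = 0 for all 1 ≤ a ≤ l−1, and M_{k+1+a,k+1+l} = M_{k+a,k+l} for all 1 ≤ a ≤ l; i.e., from row k+1 onwards the semi-infinite operator matrix M = (M_{a,b}) has Toeplitz structure (each row below row k+1 is the previous row shifted one place to the right). -/

import Mathlib

/-!
For `m ≥ 1` the subspace `N_m` is exactly the set of roots of Jordan chains of length `m`.
One inclusion holds because `b_j = M_{m-j,m} x` is a Jordan chain for `x ∈ N_m`: the recursion
for `M` telescopes against that for `E`, leaving `S_m x = 0`. The other is an induction on `m`: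
subtracting this canonical chain from an arbitrary one leaves a chain with root `0`, whose
coefficients lie in `R_1 ⊕ ⋯ ⊕ R_m`, and this forces `S̄_{m+1} b_0 ∈ R_1 ⊕ ⋯ ⊕ R_m`, hence
`S_{m+1} b_0 = 0`. Thus `N_m = {x | m ≤ rank x}`, and stabilization at `k` gives
`N_{m+1} = N_m` for `m ≥ k + 1`. Then `N^c_m = 0` for `m ≥ k + 2`, so `E_{a,b} = 0` for
`k + 2 ≤ a < b`, and the recursion for `M` collapses to `M_{a+1,b+1} = M_{a,b}`.
-/

open Finset

section

variable {𝕂 B B' : Type*} [Ring 𝕂] [AddCommGroup B] [Module 𝕂 B] [AddCommGroup B'] [Module 𝕂 B']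

theorem sum_Icc_add_right_eq {M : Type*} [AddCommMonoid M] (f : ℕ → M) (a b c : ℕ) :
    ∑ v ∈ Icc (a + c) (b + c), f v = ∑ u ∈ Icc a b, f (u + c) := by
  rw [← map_add_right_Icc, sum_map]
  rfl

theorem sum_range_succ_eq_add_sum_Icc {M : Type*} [AddCommMonoid M] (f : ℕ → M) (n : ℕ) :
    ∑ i ∈ range (n + 1), f i = f 0 + ∑ i ∈ Icc 1 n, f i := by
  rw [range_eq_Ico, sum_eq_sum_Ico_succ_bot (by omega : 0 < n + 1), zero_add,
    Ico_add_one_right_eq_Icc]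

theorem sum_apply_eq_self_of_mem_sup {V : Type*} [AddCommMonoid V] [Module 𝕂 V]
    {R Rc : ℕ → Submodule 𝕂 V} {P : ℕ → V →ₗ[𝕂] V}
    (hRc : ∀ k, R (k + 1) ⊔ Rc (k + 1) = Rc k)
    (hP_R_self : ∀ i, 1 ≤ i → ∀ y ∈ R i, P i y = y)
    (hP_Rc : ∀ i, 1 ≤ i → ∀ y ∈ Rc i, P i y = 0)
    (hP_R : ∀ i j, 1 ≤ j → j < i → ∀ y ∈ R j, P i y = 0) {t : ℕ} {y : V}
    (hy : y ∈ (Icc 1 t).sup R) : ∑ j ∈ Icc 1 t, P j y = y := by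
  have hRc_anti : Antitone Rc := antitone_nat_of_succ_le fun k => hRc k ▸ le_sup_right
  suffices (Icc 1 t).sup R ≤ LinearMap.eqLocus (∑ j ∈ Icc 1 t, P j) LinearMap.id by
    simpa [LinearMap.sum_apply] using this hy
  refine Finset.sup_le fun j hj z hz => ?_
  rw [LinearMap.mem_eqLocus, LinearMap.sum_apply, sum_eq_single_of_mem j hj]
  · exact hP_R_self j (mem_Icc.1 hj).1 z hz
  intro i hi hij
  rcases lt_or_gt_of_ne hij with hij | hij
  · obtain ⟨j, rfl⟩ : ∃ j', j = j' + 1 := ⟨j - 1, by grind⟩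
    have hz' : z ∈ Rc j := hRc j ▸ Submodule.mem_sup_left hz
    exact hP_Rc i (mem_Icc.1 hi).1 z (hRc_anti (Nat.le_of_lt_succ hij) hz')
  · exact hP_R i j (mem_Icc.1 hj).1 hij z hz

def chainCoeff (L : ℕ → B →ₗ[𝕂] B') (b : ℕ → B) (l : ℕ) : B' :=
  ∑ i ∈ range (l + 1), L i (b (l - i))

def IsJordanChain (L : ℕ → B →ₗ[𝕂] B') (m : ℕ) (b : ℕ → B) : Prop :=
  ∀ l, l + 1 ≤ m → chainCoeff L b l = 0

noncomputable def jordanRank (L : ℕ → B →ₗ[𝕂] B') (x : B) : ℕ∞ :=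
  sSup {r : ℕ∞ | ∃ m : ℕ, 1 ≤ m ∧ (∃ b : ℕ → B, b 0 = x ∧ IsJordanChain L m b) ∧ r = m}

variable {L : ℕ → B →ₗ[𝕂] B'}

theorem chainCoeff_sub (b c : ℕ → B) (l : ℕ) :
    chainCoeff L (b - c) l = chainCoeff L b l - chainCoeff L c l := by
  simp only [chainCoeff, Pi.sub_apply, map_sub, sum_sub_distrib]

theorem chainCoeff_eq_add_sum_Icc (b : ℕ → B) (l : ℕ) :
    chainCoeff L b l = L 0 (b l) + ∑ i ∈ Icc 1 l, L i (b (l - i)) :=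
  sum_range_succ_eq_add_sum_Icc _ l

theorem chainCoeff_succ_of_eq_zero {b : ℕ → B} (hb0 : b 0 = 0) (l : ℕ) :
    chainCoeff L b (l + 1) = chainCoeff L (fun j => b (j + 1)) l := by
  rw [chainCoeff, sum_range_succ, Nat.sub_self, hb0, map_zero, add_zero]
  refine sum_congr rfl fun i hi => ?_
  rw [Nat.sub_add_comm (Nat.lt_succ_iff.1 (mem_range.1 hi))]

namespace IsJordanChain

variable {m : ℕ} {b : ℕ → B}

theorem mono (hb : IsJordanChain L m b) {n : ℕ} (hnm : n ≤ m) : IsJordanChain L n b :=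
  fun l hl => hb l (hl.trans hnm)

theorem sub {c : ℕ → B} (hb : IsJordanChain L m b) (hc : IsJordanChain L m c) :
    IsJordanChain L m (b - c) :=
  fun l hl => by rw [chainCoeff_sub, hb l hl, hc l hl, sub_zero]

theorem tail (hb : IsJordanChain L (m + 1) b) (hb0 : b 0 = 0) :
    IsJordanChain L m (fun j => b (j + 1)) :=
  fun l hl => chainCoeff_succ_of_eq_zero (L := L) hb0 l ▸ hb (l + 1) (by omega)

end IsJordanChain

theorem le_jordanRank_iff {m : ℕ} (hm : 1 ≤ m) {x : B} :
    (m : ℕ∞) ≤ jordanRank L x ↔ ∃ b : ℕ → B, b 0 = x ∧ IsJordanChain L m b := by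
  constructor
  · intro h
    obtain ⟨m, rfl⟩ : ∃ m', m = m' + 1 := ⟨m - 1, by omega⟩
    obtain ⟨_, ⟨n, -, ⟨b, hb0, hb⟩, rfl⟩, hlt⟩ :=
      lt_sSup_iff.1 ((ENat.natCast_lt_natCast.2 m.lt_succ_self).trans_le h)
    exact ⟨b, hb0, hb.mono (ENat.natCast_lt_natCast.1 hlt)⟩
  · rintro ⟨b, hb0, hb⟩
    exact le_sSup ⟨m, hm, ⟨b, hb0, hb⟩, rfl⟩

end

/-- `Sb i`, `Nc i`, `Rc i` stand for `S̄_i`, `N_i^c`, `R_i^c`, and `T i` for `S_i⁻¹ ∘ 𝒫_i`. -/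
structure JordanRecursion {𝕂 B B' : Type*} [Ring 𝕂] [AddCommGroup B] [Module 𝕂 B]
    [AddCommGroup B'] [Module 𝕂 B'] (L : ℕ → B →ₗ[𝕂] B') where
  Sb : ℕ → B →ₗ[𝕂] B'
  S : ℕ → B →ₗ[𝕂] B'
  N : ℕ → Submodule 𝕂 B
  Nc : ℕ → Submodule 𝕂 B
  R : ℕ → Submodule 𝕂 B'
  Rc : ℕ → Submodule 𝕂 B'
  P : ℕ → B' →ₗ[𝕂] B'
  T : ℕ → B' →ₗ[𝕂] B
  E : ℕ → ℕ → B →ₗ[𝕂] B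
  M : ℕ → ℕ → B →ₗ[𝕂] B
  N_zero : N 0 = ⊤
  Sb_one : Sb 1 = L 0
  Sb_succ : ∀ k, 1 ≤ k → Sb (k + 1) = ∑ i ∈ Icc 1 k, (L i).comp (M i k)
  S_succ : ∀ k, S (k + 1) = Sb (k + 1) - ∑ i ∈ Icc 1 k, (P i).comp (Sb (k + 1))
  N_succ : ∀ k, N (k + 1) = LinearMap.ker (S (k + 1)) ⊓ N k
  R_succ : ∀ k, R (k + 1) = (N k).map (S (k + 1))
  disjoint_Nc_N : ∀ k, Disjoint (Nc (k + 1)) (N (k + 1))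
  Nc_sup_N : ∀ k, Nc (k + 1) ⊔ N (k + 1) = N k
  R_sup_Rc : ∀ k, R (k + 1) ⊔ Rc (k + 1) = Rc k
  range_P_le : ∀ i, 1 ≤ i → LinearMap.range (P i) ≤ R i
  P_apply_of_mem_R : ∀ i, 1 ≤ i → ∀ y ∈ R i, P i y = y
  P_apply_of_mem_Rc : ∀ i, 1 ≤ i → ∀ y ∈ Rc i, P i y = 0
  P_apply_of_mem_R_lt : ∀ i j, 1 ≤ j → j < i → ∀ y ∈ R j, P i y = 0
  T_mem_Nc : ∀ i, 1 ≤ i → ∀ y, T i y ∈ Nc i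
  S_T : ∀ i, 1 ≤ i → ∀ y, S i (T i y) = P i y
  E_self : ∀ k, E (k + 1) (k + 1) = LinearMap.id
  E_succ : ∀ k i, 1 ≤ i → i ≤ k →
    E i (k + 1) = -((T i).comp (∑ v ∈ Icc (i + 1) (k + 1), (Sb v).comp (E v (k + 1))))
  M_one_one : M 1 1 = LinearMap.id
  M_one_succ : ∀ k, 1 ≤ k → M 1 (k + 1) = E 1 (k + 1)
  M_succ : ∀ k a, 2 ≤ a → a ≤ k + 1 →
    M a (k + 1) = ∑ b ∈ Icc (a - 1) k, (M (a - 1) b).comp (E (b + 1) (k + 1))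

namespace JordanRecursion

variable {𝕂 B B' : Type*} [Ring 𝕂] [AddCommGroup B] [Module 𝕂 B] [AddCommGroup B'] [Module 𝕂 B']
  {L : ℕ → B →ₗ[𝕂] B'} (ρ : JordanRecursion L)

def Rsum (t : ℕ) : Submodule 𝕂 B' := (Icc 1 t).sup ρ.R

theorem R_le_Rsum {j t : ℕ} (hj : 1 ≤ j) (hjt : j ≤ t) : ρ.R j ≤ ρ.Rsum t :=
  le_sup (mem_Icc.2 ⟨hj, hjt⟩)

theorem Rsum_mono : Monotone ρ.Rsum :=
  fun _ _ h => sup_mono (Icc_subset_Icc_right h)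

theorem N_antitone : Antitone ρ.N :=
  antitone_nat_of_succ_le fun k => ρ.N_succ k ▸ inf_le_right

theorem Nc_le_N (k : ℕ) : ρ.Nc (k + 1) ≤ ρ.N k :=
  ρ.Nc_sup_N k ▸ le_sup_left

theorem S_apply_eq_zero {k : ℕ} {x : B} (hx : x ∈ ρ.N (k + 1)) : ρ.S (k + 1) x = 0 :=
  (ρ.N_succ k ▸ hx).1

theorem L_zero_mem_R_one (x : B) : L 0 x ∈ ρ.R 1 := by
  have hS1 : ρ.S 1 = L 0 := by simpa [ρ.Sb_one] using ρ.S_succ 0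
  rw [ρ.R_succ 0, ρ.N_zero, Submodule.map_top, ← hS1]
  exact LinearMap.mem_range_self _ x

theorem Sb_succ_apply {k : ℕ} (hk : 1 ≤ k) (x : B) :
    ρ.Sb (k + 1) x = ∑ i ∈ Icc 1 k, L i (ρ.M i k x) := by
  rw [ρ.Sb_succ k hk, LinearMap.sum_apply]
  rfl

theorem Sb_apply_eq_S_add (k : ℕ) (x : B) :
    ρ.Sb (k + 1) x = ρ.S (k + 1) x + ∑ j ∈ Icc 1 k, ρ.P j (ρ.Sb (k + 1) x) := by
  rw [ρ.S_succ k, LinearMap.sub_apply, LinearMap.sum_apply]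
  simp only [LinearMap.comp_apply, sub_add_cancel]

theorem E_succ_apply {k i : ℕ} (hi : 1 ≤ i) (hik : i ≤ k) (x : B) :
    ρ.E i (k + 1) x = -ρ.T i (∑ v ∈ Icc (i + 1) (k + 1), ρ.Sb v (ρ.E v (k + 1) x)) := by
  rw [ρ.E_succ k i hi hik]
  simp only [LinearMap.neg_apply, LinearMap.comp_apply, LinearMap.sum_apply, map_sum]

theorem M_succ_apply {k a : ℕ} (ha : 2 ≤ a) (hak : a ≤ k + 1) (x : B) :
    ρ.M a (k + 1) x = ∑ b ∈ Icc (a - 1) k, ρ.M (a - 1) b (ρ.E (b + 1) (k + 1) x) := by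
  rw [ρ.M_succ k a ha hak, LinearMap.sum_apply]
  rfl

theorem M_self {a : ℕ} (ha : 1 ≤ a) : ρ.M a a = LinearMap.id := by
  induction a, ha using Nat.le_induction with
  | base => exact ρ.M_one_one
  | succ a ha ih =>
    rw [ρ.M_succ a (a + 1) (by omega) le_rfl, Nat.add_sub_cancel, Icc_self, sum_singleton, ih,
      ρ.E_self, LinearMap.id_comp]

theorem M_one (k : ℕ) : ρ.M 1 (k + 1) = ρ.E 1 (k + 1) := by
  rcases k.eq_zero_or_pos with rfl | hk
  · rw [ρ.M_one_one, ρ.E_self]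
  · exact ρ.M_one_succ k hk

theorem E_apply_mem_N {i k : ℕ} (hik : i < k) (x : B) : ρ.E (i + 1) (k + 1) x ∈ ρ.N i := by
  rw [ρ.E_succ_apply (by omega) hik]
  exact neg_mem (ρ.Nc_le_N i (ρ.T_mem_Nc (i + 1) (by omega) _))

theorem S_apply_eq_zero_of_Sb_mem {k : ℕ} {y : B} (hy : ρ.Sb (k + 1) y ∈ ρ.Rsum k) :
    ρ.S (k + 1) y = 0 := by
  have h := ρ.Sb_apply_eq_S_add k y
  rw [sum_apply_eq_self_of_mem_sup ρ.R_sup_Rc ρ.P_apply_of_mem_R ρ.P_apply_of_mem_Rc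
    ρ.P_apply_of_mem_R_lt hy] at h
  exact add_eq_right.1 h.symm

theorem Sb_apply_mem_Rsum {k : ℕ} {x : B} (hx : x ∈ ρ.N k) :
    ρ.Sb (k + 1) x ∈ ρ.Rsum (k + 1) := by
  have hS : ρ.S (k + 1) x ∈ ρ.R (k + 1) := ρ.R_succ k ▸ Submodule.mem_map_of_mem hx
  rw [ρ.Sb_apply_eq_S_add]
  refine add_mem (ρ.R_le_Rsum (by omega) le_rfl hS) (sum_mem fun j hj => ?_)
  have hj := mem_Icc.1 hj
  exact ρ.R_le_Rsum hj.1 (by omega) (ρ.range_P_le j hj.1 (LinearMap.mem_range_self _ _))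

theorem sum_Sb_E_apply (k : ℕ) (x : B) :
    ∑ v ∈ Icc 1 (k + 1), ρ.Sb v (ρ.E v (k + 1) x) = ρ.S (k + 1) x := by
  set X : ℕ → B' := fun j => ∑ v ∈ Icc (j + 1) (k + 1), ρ.Sb v (ρ.E v (k + 1) x) with hX
  have hS_E : ∀ j ∈ Icc 1 k, ρ.S j (ρ.E j (k + 1) x) = -ρ.P j (X j) := fun j hj => by
    rw [ρ.E_succ_apply (mem_Icc.1 hj).1 (mem_Icc.1 hj).2, map_neg, ρ.S_T j (mem_Icc.1 hj).1]
  have hP : ∑ v ∈ Icc 1 (k + 1), ∑ j ∈ Icc 1 (v - 1), ρ.P j (ρ.Sb v (ρ.E v (k + 1) x)) =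
      ∑ j ∈ Icc 1 k, ρ.P j (X j) := by
    rw [sum_comm' (t' := Icc 1 k) (s' := fun j => Icc (j + 1) (k + 1))
      (fun v j => by simp only [mem_Icc]; omega)]
    simp only [hX, map_sum]
  calc ∑ v ∈ Icc 1 (k + 1), ρ.Sb v (ρ.E v (k + 1) x)
      = ∑ v ∈ Icc 1 (k + 1), (ρ.S v (ρ.E v (k + 1) x) +
          ∑ j ∈ Icc 1 (v - 1), ρ.P j (ρ.Sb v (ρ.E v (k + 1) x))) := sum_congr rfl fun v hv => by
        obtain ⟨w, rfl⟩ : ∃ w, v = w + 1 := ⟨v - 1, by grind⟩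
        exact ρ.Sb_apply_eq_S_add w _
    _ = ∑ j ∈ Icc 1 k, ρ.S j (ρ.E j (k + 1) x) + ρ.S (k + 1) x +
          ∑ j ∈ Icc 1 k, ρ.P j (X j) := by
        rw [sum_add_distrib, hP, sum_Icc_succ_top (by omega), ρ.E_self, LinearMap.id_apply]
    _ = ρ.S (k + 1) x := by
        rw [sum_congr rfl hS_E, sum_neg_distrib]
        abel

theorem sum_Sb_E_apply_eq_sum_L_M (k : ℕ) (x : B) :
    ∑ v ∈ Icc 1 (k + 1), ρ.Sb v (ρ.E v (k + 1) x) =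
      ∑ v ∈ Icc 1 (k + 1), L (v - 1) (ρ.M v (k + 1) x) := by
  rw [← insert_Icc_add_one_left_eq_Icc (by omega : 1 ≤ k + 1), sum_insert (by simp),
    sum_insert (by simp), ρ.Sb_one, ρ.M_one, sum_Icc_add_right_eq _ 1 k 1,
    sum_Icc_add_right_eq _ 1 k 1]
  congr 1
  calc ∑ v ∈ Icc 1 k, ρ.Sb (v + 1) (ρ.E (v + 1) (k + 1) x)
      = ∑ v ∈ Icc 1 k, ∑ i ∈ Icc 1 v, L i (ρ.M i v (ρ.E (v + 1) (k + 1) x)) :=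
        sum_congr rfl fun v hv => ρ.Sb_succ_apply (mem_Icc.1 hv).1 _
    _ = ∑ i ∈ Icc 1 k, L i (∑ v ∈ Icc i k, ρ.M i v (ρ.E (v + 1) (k + 1) x)) := by
        rw [sum_comm' (t' := Icc 1 k) (s' := fun i => Icc i k)
          (fun v i => by simp only [mem_Icc]; omega)]
        simp only [map_sum]
    _ = ∑ i ∈ Icc 1 k, L (i + 1 - 1) (ρ.M (i + 1) (k + 1) x) := sum_congr rfl fun i hi => by
        rw [ρ.M_succ_apply (by grind) (by grind), Nat.add_sub_cancel]

theorem sum_L_M_apply_eq_S (k : ℕ) (x : B) :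
    ∑ v ∈ Icc 1 (k + 1), L (v - 1) (ρ.M v (k + 1) x) = ρ.S (k + 1) x :=
  (ρ.sum_Sb_E_apply_eq_sum_L_M k x).symm.trans (ρ.sum_Sb_E_apply k x)

theorem sum_L_M_apply_eq_zero {k : ℕ} {x : B} (hx : x ∈ ρ.N (k + 1)) {c : ℕ} (hc : 1 ≤ c)
    (hck : c ≤ k + 1) : ∑ v ∈ Icc c (k + 1), L (v - c) (ρ.M v (k + 1) x) = 0 := by
  induction k using Nat.strong_induction_on generalizing x c with
  | _ k ih =>
  obtain rfl | hc := hc.eq_or_lt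
  · rw [ρ.sum_L_M_apply_eq_S, ρ.S_apply_eq_zero hx]
  obtain ⟨c, rfl⟩ : ∃ c', c = c' + 1 := ⟨c - 1, by omega⟩
  calc ∑ v ∈ Icc (c + 1) (k + 1), L (v - (c + 1)) (ρ.M v (k + 1) x)
      = ∑ v ∈ Icc (c + 1) (k + 1), ∑ b ∈ Icc (v - 1) k,
          L (v - (c + 1)) (ρ.M (v - 1) b (ρ.E (b + 1) (k + 1) x)) :=
        sum_congr rfl fun v hv => by rw [ρ.M_succ_apply (by grind) (by grind), map_sum]
    _ = ∑ b ∈ Icc c k, ∑ u ∈ Icc c b, L (u - c) (ρ.M u b (ρ.E (b + 1) (k + 1) x)) := by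
        rw [sum_comm' (t' := Icc c k) (s' := fun b => Icc (c + 1) (b + 1))
          (fun v b => by simp only [mem_Icc]; omega)]
        refine sum_congr rfl fun b _ => ?_
        rw [sum_Icc_add_right_eq]
        simp only [Nat.add_sub_cancel, Nat.add_sub_add_right]
    _ = 0 := sum_eq_zero fun b hb => by
        obtain ⟨hcb, hbk⟩ := mem_Icc.1 hb
        obtain ⟨b, rfl⟩ : ∃ b', b = b' + 1 := ⟨b - 1, by omega⟩
        have hy : ρ.E (b + 1 + 1) (k + 1) x ∈ ρ.N (b + 1) := by
          obtain rfl | hbk := hbk.eq_or_lt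
          · rw [ρ.E_self]
            exact ρ.N_antitone (Nat.le_succ _) hx
          · exact ρ.E_apply_mem_N hbk x
        exact ih b (by omega) hy (by omega) hcb

theorem isJordanChain_M {t : ℕ} {x : B} (hx : x ∈ ρ.N t) :
    IsJordanChain L t (fun j => ρ.M (t - j) t x) := by
  intro l hl
  obtain ⟨k, rfl⟩ : ∃ k, t = k + 1 := ⟨t - 1, by omega⟩
  rw [← ρ.sum_L_M_apply_eq_zero hx (c := k + 1 - l) (by omega) (by omega), chainCoeff,
    range_eq_Ico, Ico_add_one_right_eq_Icc,
    show Icc (k + 1 - l) (k + 1) = Icc (0 + (k + 1 - l)) (l + (k + 1 - l)) by congr 1 <;> omega,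
    sum_Icc_add_right_eq]
  refine sum_congr rfl fun i hi => ?_
  rw [Nat.add_sub_cancel, show k + 1 - (l - i) = i + (k + 1 - l) by grind]

theorem chainCoeff_sub_Sb_mem_Rsum {n : ℕ} {b : ℕ → B} (hb : IsJordanChain L n b)
    (hb0 : b 0 ∈ ρ.N n)
    (hZ : ∀ d, IsJordanChain L n d → d 0 = 0 → chainCoeff L d n ∈ ρ.Rsum n) :
    chainCoeff L b n - ρ.Sb (n + 1) (b 0) ∈ ρ.Rsum n := by
  rcases n.eq_zero_or_pos with rfl | hn
  · simp [chainCoeff, ρ.Sb_one]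
  -- `c n = M 0 n (b 0)` is a junk value, but it only enters through `L 0`, whose range is `R 1`.
  set c : ℕ → B := fun j => ρ.M (n - j) n (b 0) with hc
  have hcoeff : chainCoeff L c n = L 0 (c n) + ρ.Sb (n + 1) (b 0) := by
    rw [chainCoeff_eq_add_sum_Icc, ρ.Sb_succ_apply hn]
    refine congrArg _ (sum_congr rfl fun i hi => ?_)
    simp only [hc, Nat.sub_sub_self (mem_Icc.1 hi).2]
  have hd := hZ (b - c) (hb.sub (ρ.isJordanChain_M hb0)) (by simp [hc, ρ.M_self hn])
  rw [show chainCoeff L b n - ρ.Sb (n + 1) (b 0) = chainCoeff L (b - c) n + L 0 (c n) by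
    rw [chainCoeff_sub, hcoeff]; abel]
  exact add_mem hd (ρ.R_le_Rsum le_rfl hn (ρ.L_zero_mem_R_one _))

theorem mem_N_of_isJordanChain_of_forall_lt {n : ℕ}
    (hZ : ∀ j < n, ∀ d, IsJordanChain L j d → d 0 = 0 → chainCoeff L d j ∈ ρ.Rsum j)
    {b : ℕ → B} (hb : IsJordanChain L n b) : b 0 ∈ ρ.N n := by
  induction n with
  | zero => simp [ρ.N_zero]
  | succ n ih =>
    have hb0 := ih (fun j hj => hZ j (by omega)) (hb.mono n.le_succ)
    have h := ρ.chainCoeff_sub_Sb_mem_Rsum (hb.mono n.le_succ) hb0 (hZ n n.lt_succ_self)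
    rw [hb n le_rfl, zero_sub, neg_mem_iff] at h
    rw [ρ.N_succ n]
    exact ⟨ρ.S_apply_eq_zero_of_Sb_mem h, hb0⟩

theorem chainCoeff_mem_Rsum {n : ℕ} {d : ℕ → B} (hd : IsJordanChain L n d) (hd0 : d 0 = 0) :
    chainCoeff L d n ∈ ρ.Rsum n := by
  induction n using Nat.strong_induction_on generalizing d with
  | _ n ih =>
  rcases n with _ | n
  · simp [chainCoeff, hd0]
  have he := hd.tail hd0
  have he0 := ρ.mem_N_of_isJordanChain_of_forall_lt (fun j hj _ => ih j (by omega)) he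
  rw [chainCoeff_succ_of_eq_zero hd0, ← sub_add_cancel (chainCoeff L _ n) (ρ.Sb (n + 1) (d 1))]
  have h := ρ.chainCoeff_sub_Sb_mem_Rsum he he0 fun _ => ih n (by omega)
  exact add_mem (ρ.Rsum_mono n.le_succ h) (ρ.Sb_apply_mem_Rsum he0)

theorem mem_N_iff {m : ℕ} (hm : 1 ≤ m) {x : B} :
    x ∈ ρ.N m ↔ ∃ b : ℕ → B, b 0 = x ∧ IsJordanChain L m b :=
  ⟨fun hx => ⟨_, by simp [ρ.M_self hm], ρ.isJordanChain_M hx⟩, fun ⟨_, hb0, hb⟩ =>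
    hb0 ▸ ρ.mem_N_of_isJordanChain_of_forall_lt (fun _ _ _ => ρ.chainCoeff_mem_Rsum) hb⟩

theorem mem_N_iff_le_jordanRank {m : ℕ} (hm : 1 ≤ m) {x : B} :
    x ∈ ρ.N m ↔ (m : ℕ∞) ≤ jordanRank L x :=
  (ρ.mem_N_iff hm).trans (le_jordanRank_iff hm).symm

theorem N_succ_eq_of_jordanRank {k : ℕ}
    (hstab : ∀ x, jordanRank L x ≤ k ∨ jordanRank L x = ⊤) {m : ℕ} (hm : k + 1 ≤ m) :
    ρ.N (m + 1) = ρ.N m := by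
  refine le_antisymm (ρ.N_antitone m.le_succ) fun x hx => ?_
  rw [ρ.mem_N_iff_le_jordanRank (by omega)] at hx ⊢
  rcases hstab x with h | h
  · exact absurd (hx.trans h) (by norm_cast; omega)
  · simp [h]

theorem T_eq_zero {j : ℕ} (hj : ρ.N (j + 1) = ρ.N j) : ρ.T (j + 1) = 0 := by
  have hbot : ρ.Nc (j + 1) = ⊥ := (ρ.disjoint_Nc_N j).eq_bot_of_le (hj ▸ ρ.Nc_le_N j)
  ext y
  simpa [hbot] using ρ.T_mem_Nc (j + 1) (by omega) y

theorem E_eq_zero {i k : ℕ} (hi : 1 ≤ i) (hik : i ≤ k) (hT : ρ.T i = 0) :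
    ρ.E i (k + 1) = 0 := by
  rw [ρ.E_succ k i hi hik, hT, LinearMap.zero_comp, neg_zero]

theorem M_succ_succ {a k : ℕ} (ha : 1 ≤ a) (hak : a ≤ k)
    (hE : ∀ b, a ≤ b → b < k → ρ.E (b + 1) (k + 1) = 0) : ρ.M (a + 1) (k + 1) = ρ.M a k := by
  rw [ρ.M_succ k (a + 1) (by omega) (by omega), Nat.add_sub_cancel,
    sum_eq_single_of_mem k (mem_Icc.2 ⟨hak, le_rfl⟩), ρ.E_self, LinearMap.comp_id]
  intro b hb hbk
  rw [hE b (mem_Icc.1 hb).1 (lt_of_le_of_ne (mem_Icc.1 hb).2 hbk), LinearMap.comp_zero]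

end JordanRecursion

theorem stmt_8_general
    {𝕂 : Type*} [RCLike 𝕂]
    {B B' : Type*} [AddCommGroup B] [Module 𝕂 B]
    [AddCommGroup B'] [Module 𝕂 B']
    (L : ℕ → B →ₗ[𝕂] B')
    (Sb S : ℕ → B →ₗ[𝕂] B')
    (N Nc : ℕ → Submodule 𝕂 B)
    (R Rc : ℕ → Submodule 𝕂 B')
    (P : ℕ → B' →ₗ[𝕂] B')
    (T : ℕ → B' →ₗ[𝕂] B)
    (E M : ℕ → ℕ → B →ₗ[𝕂] B)
    (hN0 : N 0 = ⊤)
    (hSb1 : Sb 1 = L 0)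
    (hSbrec : ∀ k, 1 ≤ k → Sb (k + 1) = ∑ i ∈ Finset.Icc 1 k, (L i).comp (M i k))
    (hSdef : ∀ k, S (k + 1) = Sb (k + 1) - ∑ i ∈ Finset.Icc 1 k, (P i).comp (Sb (k + 1)))
    (hNdef : ∀ k, N (k + 1) = LinearMap.ker (S (k + 1)) ⊓ N k)
    (hRdef : ∀ k, R (k + 1) = Submodule.map (S (k + 1)) (N k))
    (hNcompl : ∀ k, Disjoint (Nc (k + 1)) (N (k + 1)) ∧ Nc (k + 1) ⊔ N (k + 1) = N k)
    (hRcompl : ∀ k, Disjoint (R (k + 1)) (Rc (k + 1)) ∧ R (k + 1) ⊔ Rc (k + 1) = Rc k)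
    (hPrange : ∀ i, 1 ≤ i → LinearMap.range (P i) ≤ R i)
    (hPid : ∀ i, 1 ≤ i → ∀ y ∈ R i, P i y = y)
    (hPzeroRc : ∀ i, 1 ≤ i → ∀ y ∈ Rc i, P i y = 0)
    (hPzeroR : ∀ i j, 1 ≤ j → j < i → ∀ y ∈ R j, P i y = 0)
    (hTrange : ∀ i, 1 ≤ i → ∀ y, T i y ∈ Nc i)
    (hST : ∀ i, 1 ≤ i → ∀ y, S i (T i y) = P i y)
    (hEdiag : ∀ k, E (k + 1) (k + 1) = LinearMap.id)
    (hErec : ∀ k i, 1 ≤ i → i ≤ k →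
      E i (k + 1) = -((T i).comp (∑ v ∈ Finset.Icc (i + 1) (k + 1), (Sb v).comp (E v (k + 1)))))
    (hM11 : M 1 1 = LinearMap.id)
    (hM1 : ∀ k, 1 ≤ k → M 1 (k + 1) = E 1 (k + 1))
    (hMrec : ∀ k a, 2 ≤ a → a ≤ k + 1 →
      M a (k + 1) = ∑ b ∈ Finset.Icc (a - 1) k, (M (a - 1) b).comp (E (b + 1) (k + 1)))
    (rank : B → ℕ∞)
    (hrank : ∀ b0 : B, rank b0 = sSup {x : ℕ∞ | ∃ m : ℕ, 1 ≤ m ∧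
      (∃ b : ℕ → B, b 0 = b0 ∧
        ∀ l, l + 1 ≤ m → ∑ i ∈ Finset.range (l + 1), L i (b (l - i)) = 0) ∧ x = (m : ℕ∞)})
    (k : ℕ)
    (hstab : (∀ b0 : B, rank b0 ≤ (k : ℕ∞) ∨ rank b0 = ⊤) ∧ ∃ b0 : B, rank b0 = (k : ℕ∞))
    :
    ∀ l, 2 ≤ l →
      (∀ a, 1 ≤ a → a + 1 ≤ l → E (k + 1 + a) (k + 1 + l) = 0) ∧
      (∀ a, 1 ≤ a → a ≤ l → M (k + 1 + a) (k + 1 + l) = M (k + a) (k + l)) := by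
  let ρ : JordanRecursion L := ⟨Sb, S, N, Nc, R, Rc, P, T, E, M, hN0, hSb1, hSbrec, hSdef, hNdef,
    hRdef, fun k => (hNcompl k).1, fun k => (hNcompl k).2, fun k => (hRcompl k).2, hPrange, hPid,
    hPzeroRc, hPzeroR, hTrange, hST, hEdiag, hErec, hM11, hM1, hMrec⟩
  obtain rfl : rank = jordanRank L := funext hrank
  have hT : ∀ j, k + 2 ≤ j → T j = 0 := fun j hj => by
    obtain ⟨j, rfl⟩ : ∃ i, j = i + 1 := ⟨j - 1, by omega⟩
    exact ρ.T_eq_zero (ρ.N_succ_eq_of_jordanRank hstab.1 (by omega))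
  have hE : ∀ a l, 1 ≤ a → a < l → E (k + 1 + a) (k + 1 + l) = 0 := fun a l ha hal => by
    rw [show k + 1 + l = k + l + 1 by omega]
    exact ρ.E_eq_zero (by omega) (by omega) (hT _ (by omega))
  refine fun l hl => ⟨fun a ha hal => hE a l ha hal, fun a ha hal => ?_⟩
  rw [show k + 1 + a = k + a + 1 by omega, show k + 1 + l = k + l + 1 by omega]
  refine ρ.M_succ_succ (by omega) (by omega) fun b hab hbl => ?_
  rw [show b + 1 = k + 1 + (b - k) by omega, show k + l + 1 = k + 1 + l by omega]
  exact hE _ _ (by omega) (by omega)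

theorem stmt_8
    {𝕂 : Type*} [RCLike 𝕂]
    {B B' : Type*} [AddCommGroup B] [Module 𝕂 B]
    [AddCommGroup B'] [Module 𝕂 B']
    (L : ℕ → B →ₗ[𝕂] B')
    (Sb S : ℕ → B →ₗ[𝕂] B')
    (N Nc : ℕ → Submodule 𝕂 B)
    (R Rc : ℕ → Submodule 𝕂 B')
    (P : ℕ → B' →ₗ[𝕂] B')
    (T : ℕ → B' →ₗ[𝕂] B)
    (E M : ℕ → ℕ → B →ₗ[𝕂] B)
    (hL : ∃ i, L i ≠ 0)
    (hN0 : N 0 = ⊤) (hRc0 : Rc 0 = ⊤)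
    (hSb1 : Sb 1 = L 0)
    (hSbrec : ∀ k, 1 ≤ k → Sb (k + 1) = ∑ i ∈ Finset.Icc 1 k, (L i).comp (M i k))
    (hSdef : ∀ k, S (k + 1) = Sb (k + 1) - ∑ i ∈ Finset.Icc 1 k, (P i).comp (Sb (k + 1)))
    (hNdef : ∀ k, N (k + 1) = LinearMap.ker (S (k + 1)) ⊓ N k)
    (hRdef : ∀ k, R (k + 1) = Submodule.map (S (k + 1)) (N k))
    (hNcompl : ∀ k, Disjoint (Nc (k + 1)) (N (k + 1)) ∧ Nc (k + 1) ⊔ N (k + 1) = N k)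
    (hRcompl : ∀ k, Disjoint (R (k + 1)) (Rc (k + 1)) ∧ R (k + 1) ⊔ Rc (k + 1) = Rc k)
    (hPrange : ∀ i, 1 ≤ i → LinearMap.range (P i) ≤ R i)
    (hPid : ∀ i, 1 ≤ i → ∀ y ∈ R i, P i y = y)
    (hPzeroRc : ∀ i, 1 ≤ i → ∀ y ∈ Rc i, P i y = 0)
    (hPzeroR : ∀ i j, 1 ≤ j → j < i → ∀ y ∈ R j, P i y = 0)
    (hTrange : ∀ i, 1 ≤ i → ∀ y, T i y ∈ Nc i)
    (hTS : ∀ i, 1 ≤ i → ∀ x ∈ Nc i, T i (S i x) = x)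
    (hST : ∀ i, 1 ≤ i → ∀ y, S i (T i y) = P i y)
    (hE11 : E 1 1 = LinearMap.id)
    (hEdiag : ∀ k, E (k + 1) (k + 1) = LinearMap.id)
    (hErec : ∀ k i, 1 ≤ i → i ≤ k →
      E i (k + 1) = -((T i).comp (∑ v ∈ Finset.Icc (i + 1) (k + 1), (Sb v).comp (E v (k + 1)))))
    (hM11 : M 1 1 = LinearMap.id)
    (hM1 : ∀ k, 1 ≤ k → M 1 (k + 1) = E 1 (k + 1))
    (hMrec : ∀ k a, 2 ≤ a → a ≤ k + 1 →
      M a (k + 1) = ∑ b ∈ Finset.Icc (a - 1) k, (M (a - 1) b).comp (E (b + 1) (k + 1)))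
    (rank : B → ℕ∞)
    (hrank : ∀ b0 : B, rank b0 = sSup {x : ℕ∞ | ∃ m : ℕ, 1 ≤ m ∧
      (∃ b : ℕ → B, b 0 = b0 ∧
        ∀ l, l + 1 ≤ m → ∑ i ∈ Finset.range (l + 1), L i (b (l - i)) = 0) ∧ x = (m : ℕ∞)})
    (k : ℕ)
    (hstab : (∀ b0 : B, rank b0 ≤ (k : ℕ∞) ∨ rank b0 = ⊤) ∧ ∃ b0 : B, rank b0 = (k : ℕ∞))
    :
    ∀ l, 2 ≤ l →
      (∀ a, 1 ≤ a → a + 1 ≤ l → E (k + 1 + a) (k + 1 + l) = 0) ∧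
      (∀ a, 1 ≤ a → a ≤ l → M (k + 1 + a) (k + 1 + l) = M (k + a) (k + l)) :=
  stmt_8_general L Sb S N Nc R Rc P T E M hN0 hSb1 hSbrec hSdef hNdef hRdef hNcompl hRcompl hPrange
    hPid hPzeroRc hPzeroR hTrange hST hEdiag hErec hM11 hM1 hMrec rank hrank k hstab
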